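/- If for each $y_0 \in Y$ one has $\sup_{y_1 \in Y,\, y_0 \leq y \leq y_1} \left[ \frac{D^{min}_\mu(y_0,y_1,k(y_0))}{y_1 - y_0} - \bar\nu(y) \right] < 0$, where $\bar\nu$ is the Lebesgue density of $\nu$, then $(c,\mu,\nu)$ is nested. (In particular, the hypothesis implies $D^{min}_\mu(y_0,y_1,k(y_0)) < \nu([y_0,y_1])$ for all $y_0 < y_1$, by integrating the pointwise density bound over $[y_0,y_1]$.) -/

import Mathlib

open MeasureTheory Set

noncomputable section

/-- Super-level set `X_{≥}(y,k)` of `∂_y c(·,y)` within `X`. -/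
def Xge {m : ℕ} (X : Set (EuclideanSpace ℝ (Fin m)))
    (c : EuclideanSpace ℝ (Fin m) → ℝ → ℝ) (y k : ℝ) : Set (EuclideanSpace ℝ (Fin m)) :=
  {x ∈ X | k ≤ deriv (c x) y}

/-- Level set `X_{=}(y,k)`. -/
def Xeq {m : ℕ} (X : Set (EuclideanSpace ℝ (Fin m)))
    (c : EuclideanSpace ℝ (Fin m) → ℝ → ℝ) (y k : ℝ) : Set (EuclideanSpace ℝ (Fin m)) :=
  {x ∈ X | deriv (c x) y = k}

/-- Strict super-level set `X_{>}(y,k) = X_{≥}(y,k) \ X_{=}(y,k)`. -/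
def Xgt {m : ℕ} (X : Set (EuclideanSpace ℝ (Fin m)))
    (c : EuclideanSpace ℝ (Fin m) → ℝ → ℝ) (y k : ℝ) : Set (EuclideanSpace ℝ (Fin m)) :=
  Xge X c y k \ Xeq X c y k

/-- `k_max(y₀,y₁,k₀) = sup{k : X_{≥}(y₀,k₀) ⊆ X_{≥}(y₁,k)}`. -/
def kmax {m : ℕ} (X : Set (EuclideanSpace ℝ (Fin m)))
    (c : EuclideanSpace ℝ (Fin m) → ℝ → ℝ) (y0 y1 k0 : ℝ) : ℝ :=
  sSup {k : ℝ | Xge X c y0 k0 ⊆ Xge X c y1 k}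

/-- Minimal mass difference `D^{min}_μ(y₀,y₁,k₀)`. -/
def Dmin {m : ℕ} (μ : Measure (EuclideanSpace ℝ (Fin m)))
    (X : Set (EuclideanSpace ℝ (Fin m))) (c : EuclideanSpace ℝ (Fin m) → ℝ → ℝ)
    (y0 y1 k0 : ℝ) : ENNReal :=
  μ (Xge X c y1 (kmax X c y0 y1 k0) \ Xge X c y0 k0)

/-- The model `(c,μ,ν)` is nested. -/
def Nested {m : ℕ} (ν : Measure ℝ) (X : Set (EuclideanSpace ℝ (Fin m)))
    (c : EuclideanSpace ℝ (Fin m) → ℝ → ℝ) (Y : Set ℝ) (k : ℝ → ℝ) : Prop :=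
  ∀ y0 ∈ Y, ∀ y1 ∈ Y, y0 < y1 → 0 < ν (Icc y0 y1) →
    Xge X c y0 (k y0) ⊆ Xgt X c y1 (k y1)

/-! The hypothesis gives `D^{min}_μ(y₀,y₁,k(y₀)) < ν([y₀,y₁])` after integrating the density bound
over `[y₀,y₁]`. Since `X_{≥}(y₀,k(y₀)) ⊆ X_{≥}(y₁,k_max)`, the set `X_{≥}(y₁,k_max)` then carries
mass `< ν((-∞,y₀]) + ν([y₀,y₁]) = ν((-∞,y₁]) = μ(X_{≥}(y₁,k(y₁)))`, which forces
`k(y₁) < k_max ≤ ∂_y c(x,y₁)` on `X_{≥}(y₀,k(y₀))`. -/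

theorem continuous_deriv_apply_of_contDiff {E : Type*} [NormedAddCommGroup E] [NormedSpace ℝ E]
    {c : E → ℝ → ℝ} {n : WithTop ℕ∞} (hc : ContDiff ℝ n (fun p : E × ℝ => c p.1 p.2)) (hn : n ≠ 0)
    (y : ℝ) :
    Continuous fun x => deriv (c x) y := by
  have hderiv : ∀ x, deriv (c x) y = fderiv ℝ (fun p : E × ℝ => c p.1 p.2) (x, y) (0, 1) := fun x =>
    ((hc.differentiable hn (x, y)).hasFDerivAt.comp_hasDerivAt y
      ((hasDerivAt_const y x).prodMk (hasDerivAt_id y))).deriv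
  simp only [hderiv]
  exact ((hc.continuous_fderiv hn).comp (continuous_id.prodMk continuous_const)).clm_apply
    continuous_const

section LevelSets

variable {m : ℕ} {X : Set (EuclideanSpace ℝ (Fin m))} {c : EuclideanSpace ℝ (Fin m) → ℝ → ℝ}

theorem Xge_anti {y k k' : ℝ} (hk : k ≤ k') : Xge X c y k' ⊆ Xge X c y k :=
  fun _ hx => ⟨hx.1, hk.trans hx.2⟩

theorem Xge_subset_Xge_kmax {y0 y1 k0 : ℝ} (hbdd : BddBelow ((fun x => deriv (c x) y1) '' X)) :
    Xge X c y0 k0 ⊆ Xge X c y1 (kmax X c y0 y1 k0) := by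
  obtain ⟨b, hb⟩ := hbdd
  intro x hx
  have hb_mem : Xge X c y0 k0 ⊆ Xge X c y1 b := fun x' hx' => ⟨hx'.1, hb ⟨x', hx'.1, rfl⟩⟩
  exact ⟨hx.1, csSup_le ⟨b, hb_mem⟩ fun κ hκ => (hκ hx).2⟩

theorem measure_Xge_kmax_le_add_Dmin (μ : Measure (EuclideanSpace ℝ (Fin m))) (y0 y1 k0 : ℝ) :
    μ (Xge X c y1 (kmax X c y0 y1 k0)) ≤ μ (Xge X c y0 k0) + Dmin μ X c y0 y1 k0 :=
  (measure_le_inter_add_sdiff μ _ _).trans (by gcongr; exacts [inter_subset_right, le_rfl])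

end LevelSets

theorem measure_Iic_add_measure_Icc {ν : Measure ℝ} [NullSingletonClass ν] {a b : ℝ} (hab : a ≤ b) :
    ν (Iic a) + ν (Icc a b) = ν (Iic b) := by
  rw [← measure_congr (Ioc_ae_eq_Icc (μ := ν)), ← measure_union (Iic_disjoint_Ioc le_rfl)
    measurableSet_Ioc, Iic_union_Ioc_eq_Iic hab]

theorem nested_of_Dmin_lt {m : ℕ} {X : Set (EuclideanSpace ℝ (Fin m))} {Y : Set ℝ}
    {c : EuclideanSpace ℝ (Fin m) → ℝ → ℝ} {μ : Measure (EuclideanSpace ℝ (Fin m))} {ν : Measure ℝ}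
    [IsFiniteMeasure μ] [NullSingletonClass ν] {k : ℝ → ℝ}
    (hk : ∀ y ∈ Y, μ (Xge X c y (k y)) = ν (Iic y))
    (hbdd : ∀ y, BddBelow ((fun x => deriv (c x) y) '' X))
    (hD : ∀ y0 ∈ Y, ∀ y1 ∈ Y, y0 < y1 → Dmin μ X c y0 y1 (k y0) < ν (Icc y0 y1)) :
    Nested ν X c Y k := by
  intro y0 hy0 y1 hy1 hlt _
  have hk_lt : k y1 < kmax X c y0 y1 (k y0) := by
    by_contra! hle
    have hfin : ν (Iic y0) ≠ ⊤ := hk y0 hy0 ▸ measure_ne_top μ _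
    have := calc ν (Iic y1) = μ (Xge X c y1 (k y1)) := (hk y1 hy1).symm
      _ ≤ μ (Xge X c y1 (kmax X c y0 y1 (k y0))) := measure_mono (Xge_anti hle)
      _ ≤ ν (Iic y0) + Dmin μ X c y0 y1 (k y0) := hk y0 hy0 ▸ measure_Xge_kmax_le_add_Dmin μ _ _ _
      _ < ν (Iic y0) + ν (Icc y0 y1) := ENNReal.add_lt_add_left hfin (hD y0 hy0 y1 hy1 hlt)
      _ = ν (Iic y1) := measure_Iic_add_measure_Icc hlt.le
    exact this.false
  intro x hx
  have hkmax_le : kmax X c y0 y1 (k y0) ≤ deriv (c x) y1 := (Xge_subset_Xge_kmax (hbdd y1) hx).2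
  exact ⟨⟨hx.1, hk_lt.le.trans hkmax_le⟩, fun hx_eq => by linarith [hx_eq.2]⟩

theorem Real.bddAbove_of_sSup_neg {s : Set ℝ} (hs : sSup s < 0) : BddAbove s := by
  by_contra hs'
  rw [Real.sSup_of_not_bddAbove hs'] at hs
  exact hs.false

theorem ofReal_mul_lt_withDensity_Icc {f : ℝ → ℝ} {a b d s : ℝ} (hab : a < b) (hd : 0 ≤ d)
    (hs : s < 0) (hf : ∀ y ∈ Icc a b, d - f y ≤ s) :
    ENNReal.ofReal (d * (b - a)) < volume.withDensity (fun y => ENNReal.ofReal (f y)) (Icc a b) :=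
  calc ENNReal.ofReal (d * (b - a)) < ENNReal.ofReal ((d - s) * (b - a)) :=
        ENNReal.ofReal_lt_ofReal_iff'.2 ⟨by nlinarith, by nlinarith⟩
    _ = ∫⁻ _ in Icc a b, ENNReal.ofReal (d - s) := by
        rw [setLIntegral_const, Real.volume_Icc, ENNReal.ofReal_mul (by linarith)]
    _ ≤ ∫⁻ y in Icc a b, ENNReal.ofReal (f y) :=
        setLIntegral_mono' measurableSet_Icc fun y hy =>
          ENNReal.ofReal_le_ofReal (by linarith [hf y hy])
    _ = _ := (withDensity_apply' _ _).symm

theorem stmt2_general {m : ℕ} (X : Set (EuclideanSpace ℝ (Fin m))) (Y : Set ℝ)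
    (hXbdd : Bornology.IsBounded X)
    (c : EuclideanSpace ℝ (Fin m) → ℝ → ℝ)
    (hc : ContDiff ℝ 2 (fun p : EuclideanSpace ℝ (Fin m) × ℝ => c p.1 p.2))
    (μ : Measure (EuclideanSpace ℝ (Fin m))) (ν : Measure ℝ)
    [IsProbabilityMeasure μ]
    (k : ℝ → ℝ)
    (hk : ∀ y ∈ Y, μ (Xge X c y (k y)) = ν (Iic y))
    (barν : ℝ → ℝ)
    (hdens : ν = volume.withDensity (fun y => ENNReal.ofReal (barν y)))
    (h : ∀ y0 ∈ Y,
      sSup {r : ℝ | ∃ y1 ∈ Y, y0 < y1 ∧ ∃ y, y0 ≤ y ∧ y ≤ y1 ∧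
        r = (Dmin μ X c y0 y1 (k y0)).toReal / (y1 - y0) - barν y} < 0) :
    Nested ν X c Y k := by
  subst hdens
  have hbdd (y : ℝ) : BddBelow ((fun x => deriv (c x) y) '' X) := by
    have hcont := continuous_deriv_apply_of_contDiff hc two_ne_zero y
    exact (hXbdd.isCompact_closure.image hcont).bddBelow.mono (image_mono subset_closure)
  refine nested_of_Dmin_lt hk hbdd fun y0 hy0 y1 hy1 hlt => ?_
  have hdiff_pos : 0 < y1 - y0 := sub_pos.2 hlt
  have hbound : ∀ y ∈ Icc y0 y1,
      (Dmin μ X c y0 y1 (k y0)).toReal / (y1 - y0) - barν y ≤ sSup _ := fun y hy =>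
    le_csSup (Real.bddAbove_of_sSup_neg (h y0 hy0)) ⟨y1, hy1, hlt, y, hy.1, hy.2, rfl⟩
  have := ofReal_mul_lt_withDensity_Icc hlt (by positivity) (h y0 hy0) hbound
  rwa [div_mul_cancel₀ _ hdiff_pos.ne',
    ENNReal.ofReal_toReal (a := Dmin μ X c y0 y1 (k y0)) (measure_ne_top μ _)] at this

theorem stmt2 {m : ℕ} (X : Set (EuclideanSpace ℝ (Fin m))) (Y : Set ℝ)
    (hXopen : IsOpen X) (hXbdd : Bornology.IsBounded X)
    (hYopen : IsOpen Y) (hYbdd : Bornology.IsBounded Y)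
    (c : EuclideanSpace ℝ (Fin m) → ℝ → ℝ)
    (hc : ContDiff ℝ 2 (fun p : EuclideanSpace ℝ (Fin m) × ℝ => c p.1 p.2))
    (μ : Measure (EuclideanSpace ℝ (Fin m))) (ν : Measure ℝ)
    [IsProbabilityMeasure μ] [IsProbabilityMeasure ν]
    (hμac : μ ≪ volume) (hνac : ν ≪ volume)
    (hμsupp : μ (closure X) = 1) (hνsupp : ν (closure Y) = 1)
    (k : ℝ → ℝ)
    (hk : ∀ y ∈ Y, μ (Xge X c y (k y)) = ν (Iic y))
    (barν : ℝ → ℝ)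
    (hdens : ν = volume.withDensity (fun y => ENNReal.ofReal (barν y)))
    (h : ∀ y0 ∈ Y,
      sSup {r : ℝ | ∃ y1 ∈ Y, y0 < y1 ∧ ∃ y, y0 ≤ y ∧ y ≤ y1 ∧
        r = (Dmin μ X c y0 y1 (k y0)).toReal / (y1 - y0) - barν y} < 0) :
    Nested ν X c Y k :=
  stmt2_general X Y hXbdd c hc μ ν k hk barν hdens h

end
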